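/- arXiv:2401.07106 — 7 statements merged into one kernel-verified Lean document; each statement's English description precedes it below -/
import Mathlib

section
/- For any alphabet atom Δ* (with Δ a nonempty subset of Σ) and any atom α (either {a, ε} for a letter a, or Δ'* for a nonempty Δ' ⊆ Σ), the concatenation Idl(Δ*)·Idl(α) equals Idl(Δ*) if and only if the language of α is contained in Δ* (i.e., a ∈ Δ for a single atom, or Δ' ⊆ Δ for an alphabet atom). -/
def IsDirectedLang {A : Type*} (L : Set (List A)) : Prop :=
  ∀ u ∈ L, ∀ v ∈ L, ∃ w ∈ L, u.Sublist w ∧ v.Sublist w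

def dcl {A : Type*} (L : Set (List A)) : Set (List A) := {u | ∃ v ∈ L, u.Sublist v}

def DownwardClosed {A : Type*} (D : Set (List A)) : Prop :=
  ∀ u v : List A, u.Sublist v → v ∈ D → u ∈ D

def IsIdeal {A : Type*} (I : Set (List A)) : Prop :=
  I.Nonempty ∧ DownwardClosed I ∧ IsDirectedLang I

inductive Atom (A : Type*) where
  | single : A → Atom A
  | alph : Finset A → Atom A

def Atom.lang {A : Type*} : Atom A → Set (List A)
  | .single a => {[], [a]}
  | .alph d => {w | ∀ c ∈ w, c ∈ d}

def Atom.Valid {A : Type*} : Atom A → Prop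
  | .single _ => True
  | .alph d => d.Nonempty

def conc {A : Type*} (L M : Set (List A)) : Set (List A) :=
  {w | ∃ u ∈ L, ∃ v ∈ M, w = u ++ v}

def Idl {A : Type*} : List (Atom A) → Set (List A)
  | [] => {[]}
  | α :: r => conc α.lang (Idl r)

def LeftAbsorbs {A : Type*} (α β : Atom A) : Prop := Idl [α, β] = Idl [α]
def RightAbsorbs {A : Type*} (α β : Atom A) : Prop := Idl [α, β] = Idl [β]
def Absorptive {A : Type*} (α β : Atom A) : Prop := LeftAbsorbs α β ∨ RightAbsorbs α β
def Reduced {A : Type*} (r : List (Atom A)) : Prop := r.Chain' fun α β => ¬ Absorptive α β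

def atomWeight {A : Type*} (k : ℕ) : Atom A → ℕ
  | .single _ => 1
  | .alph d => (k+1) ^ d.card

def repWeight {A : Type*} (k : ℕ) (r : List (Atom A)) : ℕ := (r.map (atomWeight k)).sum

theorem alph_absorbs_iff {A : Type*} (Δ : Finset A) (hΔ : Δ.Nonempty)
    (α : Atom A) (hα : α.Valid) :
    conc (Atom.alph Δ).lang α.lang = (Atom.alph Δ).lang ↔
      (match α with
       | .single a => a ∈ Δ
       | .alph Δ' => Δ' ⊆ Δ) := by
  constructor
  · intro h
    match α with
    | .single a =>
      have ha : [a] ∈ conc (Atom.alph Δ).lang (Atom.single a).lang :=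
        ⟨[], by intro c hc; simp at hc, [a], by simp [Atom.lang], rfl⟩
      rw [h] at ha
      exact ha a (by simp)
    | .alph Δ' =>
      intro c hc
      have hc' : [c] ∈ conc (Atom.alph Δ).lang (Atom.alph Δ').lang :=
        ⟨[], by intro x hx; simp at hx, [c], by intro x hx; simp at hx; subst hx; exact hc, rfl⟩
      rw [h] at hc'
      exact hc' c (by simp)
  · intro h
    have hsub : α.lang ⊆ (Atom.alph Δ).lang := by
      match α with
      | .single a =>
        intro w hw
        rcases hw with hw | hw <;> subst hw <;> intro c hc <;> simp at hc
        subst hc; exact h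
      | .alph Δ' =>
        intro w hw c hc
        exact h (hw c hc)
    have hnil : [] ∈ α.lang := by
      match α with
      | .single a => left; rfl
      | .alph Δ' => intro c hc; simp at hc
    ext w
    constructor
    · rintro ⟨u, hu, v, hv, rfl⟩
      intro c hc
      rcases List.mem_append.1 hc with h1 | h2
      · exact hu c h1
      · exact hsub hv c h2
    · intro hw
      exact ⟨w, hw, [], hnil, by simp⟩
end

section
/- Let α₁⋯αₙ and β₁⋯β_m be sequences of atoms over Σ representing ideals I and J respectively. If I ⊆ J, then there exists a function f : {1,…,n} → {1,…,m} such that (1) f is monotone (f(i) ≤ f(i+1)), (2) Idl(α_i) ⊆ Idl(β_{f(i)}) for all i, and (3) if β_j is a single atom then f⁻¹(j) has at most one element. -/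
section

variable {A : Type*}

theorem Atom.nil_mem_lang (γ : Atom A) : [] ∈ γ.lang := by
  cases γ with
  | single c => exact Or.inl rfl
  | alph d => exact fun _ h => absurd h List.not_mem_nil

theorem Atom.downwardClosed_lang (γ : Atom A) : DownwardClosed γ.lang := by
  intro u v huv hv
  cases γ with
  | single c =>
    rcases hv with rfl | rfl
    · exact Or.inl (List.sublist_nil.mp huv)
    · exact List.sublist_singleton.mp huv
  | alph d => exact fun c hc => hv c (huv.subset hc)

theorem Atom.Valid.exists_ne_nil {γ : Atom A} (hγ : γ.Valid) : ∃ x ∈ γ.lang, x ≠ [] := by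
  cases γ with
  | single c => exact ⟨[c], Or.inr rfl, List.cons_ne_nil _ _⟩
  | alph d =>
    obtain ⟨c, hc⟩ := hγ
    exact ⟨[c], by simpa [Atom.lang] using hc, List.cons_ne_nil _ _⟩

theorem Atom.Valid.eq_single_of_lang_subset {α : Atom A} {c : A} (hα : α.Valid)
    (h : α.lang ⊆ (Atom.single c).lang) : α = Atom.single c := by
  cases α with
  | single c' => simpa [Atom.lang] using h (Or.inr rfl : [c'] ∈ (Atom.single c').lang)
  | alph d =>
    obtain ⟨e, he⟩ := hα
    have hee : [e, e] ∈ (Atom.single c).lang := h (by simpa [Atom.lang] using he)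
    simp [Atom.lang] at hee

theorem nil_mem_Idl (r : List (Atom A)) : [] ∈ Idl r := by
  induction r with
  | nil => rfl
  | cons γ r ih => exact ⟨[], γ.nil_mem_lang, [], ih, rfl⟩

theorem downwardClosed_Idl (r : List (Atom A)) : DownwardClosed (Idl r) := by
  induction r with
  | nil =>
    rintro u _ huv rfl
    exact List.sublist_nil.mp huv
  | cons γ r ih =>
    rintro w _ hw ⟨p, hp, q, hq, rfl⟩
    obtain ⟨u, v, rfl, hu, hv⟩ := List.sublist_append_iff.mp hw
    exact ⟨u, γ.downwardClosed_lang u p hu hp, v, ih v q hv hq, rfl⟩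

theorem Idl_singleton (γ : Atom A) : Idl [γ] = γ.lang := by
  ext w
  constructor
  · rintro ⟨u, hu, _, rfl, rfl⟩
    simpa using hu
  · exact fun hw => ⟨w, hw, [], rfl, (List.append_nil w).symm⟩

theorem Idl_subset_Idl_cons (γ : Atom A) (r : List (Atom A)) : Idl r ⊆ Idl (γ :: r) :=
  fun w hw => ⟨[], γ.nil_mem_lang, w, hw, rfl⟩

theorem exists_suffix_append_mem_of_append_mem_conc {L M : Set (List A)}
    (hL : DownwardClosed L) {x y : List A} (hx : x ∉ L) (h : x ++ y ∈ conc L M) :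
    ∃ s, s ≠ [] ∧ s <:+ x ∧ s ++ y ∈ M := by
  obtain ⟨p, hp, q, hq, he⟩ := h
  rcases List.append_eq_append_iff.mp he with ⟨s, rfl, -⟩ | ⟨s, rfl, rfl⟩
  · exact absurd (hL x _ (List.sublist_append_left x s) hp) hx
  · refine ⟨s, ?_, List.suffix_append p s, hq⟩
    rintro rfl
    exact hx (by simpa using hp)

theorem Idl_subset_of_single_cons {c : A} {a b : List (Atom A)}
    (h : Idl (Atom.single c :: a) ⊆ Idl (Atom.single c :: b)) : Idl a ⊆ Idl b := by
  intro v hv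
  obtain ⟨p, hp, q, hq, he⟩ := h ⟨[c], Or.inr rfl, v, hv, rfl⟩
  rcases hp with rfl | rfl
  · rw [List.nil_append] at he
    exact downwardClosed_Idl b v q (he ▸ List.sublist_cons_self c v) hq
  · obtain rfl : v = q := by simpa using he
    exact hq

theorem Idl_cons_subset_of_not_lang_subset {α β : Atom A} {a b : List (Atom A)}
    (h : Idl (α :: a) ⊆ Idl (β :: b)) (hαβ : ¬ α.lang ⊆ β.lang) : Idl (α :: a) ⊆ Idl b := by
  obtain ⟨x, hx, hxβ⟩ := Set.not_subset.mp hαβ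
  rintro _ ⟨u, hu, v, hv, rfl⟩
  cases α with
  | single c =>
    obtain rfl : x = [c] := hx.resolve_left (by rintro rfl; exact hxβ β.nil_mem_lang)
    obtain ⟨s, hs, hsx, hsv⟩ := exists_suffix_append_mem_of_append_mem_conc
      β.downwardClosed_lang hxβ (h ⟨[c], Or.inr rfl, v, hv, rfl⟩)
    obtain rfl : s = [c] := (List.suffix_cons_iff.mp hsx).resolve_right
      (fun hs' => hs (List.suffix_nil.mp hs'))
    refine downwardClosed_Idl b _ _ ?_ hsv
    rcases hu with rfl | rfl
    · exact List.sublist_cons_self c v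
    · exact List.Sublist.refl _
  | alph d =>
    have hxu : x ++ u ∈ (Atom.alph d).lang := fun e he =>
      (List.mem_append.mp he).elim (hx e) (hu e)
    obtain ⟨s, -, -, hs⟩ := exists_suffix_append_mem_of_append_mem_conc
      β.downwardClosed_lang hxβ (List.append_assoc x u v ▸ h ⟨x ++ u, hxu, v, hv, rfl⟩)
    exact downwardClosed_Idl b _ _ (List.suffix_append s _).sublist hs

structure IsAtomEmbedding (a b : List (Atom A)) (f : Fin a.length → Fin b.length) : Prop where
  monotone : Monotone f
  lang_subset : ∀ i, (a.get i).lang ⊆ (b.get (f i)).lang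
  injOn_single : ∀ j, (∃ c, b.get j = Atom.single c) → ∀ i i', f i = j → f i' = j → i = i'

namespace IsAtomEmbedding

variable {a b : List (Atom A)} {f : Fin a.length → Fin b.length}

theorem nil (b : List (Atom A)) : IsAtomEmbedding [] b Fin.elim0 :=
  ⟨fun i => i.elim0, fun i => i.elim0, fun _ _ i => i.elim0⟩

theorem succ (hf : IsAtomEmbedding a b f) (β : Atom A) :
    IsAtomEmbedding a (β :: b) (Fin.succ ∘ f) where
  monotone := Fin.strictMono_succ.monotone.comp hf.monotone
  lang_subset := hf.lang_subset
  injOn_single j := by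
    refine Fin.cases (fun _ i _ hi => absurd hi (Fin.succ_ne_zero _)) (fun j hj i i' hi hi' => ?_) j
    exact hf.injOn_single j hj i i' (Fin.succ_injective _ hi) (Fin.succ_injective _ hi')

theorem cons {α β : Atom A} {f : Fin a.length → Fin (β :: b).length}
    (hf : IsAtomEmbedding a (β :: b) f) (hαβ : α.lang ⊆ β.lang)
    (hβ : (∃ c, β = Atom.single c) → ∀ i, f i ≠ 0) :
    IsAtomEmbedding (α :: a) (β :: b) (Fin.cons 0 f) where
  monotone := monotone_iff_forall_lt.2 <|
    (Fin.liftFun_cons (· ≤ ·)).2 ⟨fun _ => Fin.zero_le _, fun _ _ h => hf.monotone h.le⟩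
  lang_subset := Fin.cases hαβ hf.lang_subset
  injOn_single j hj i i' hi hi' := by
    cases i using Fin.cases <;> cases i' using Fin.cases <;>
      simp only [Fin.cons_zero, Fin.cons_succ] at hi hi'
    · rfl
    · subst hi; exact absurd hi' (hβ hj _)
    · subst hi'; exact absurd hi (hβ hj _)
    · exact congrArg Fin.succ (hf.injOn_single j hj _ _ hi hi')

end IsAtomEmbedding

theorem exists_isAtomEmbedding {a b : List (Atom A)} (ha : ∀ α ∈ a, α.Valid)
    (h : Idl a ⊆ Idl b) : ∃ f, IsAtomEmbedding a b f := by
  induction a generalizing b with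
  | nil => exact ⟨_, .nil b⟩
  | cons α a ih =>
    have hα : α.Valid := ha α List.mem_cons_self
    have ha' : ∀ γ ∈ a, γ.Valid := fun γ hγ => ha γ (List.mem_cons_of_mem α hγ)
    induction b with
    | nil =>
      obtain ⟨x, hx, hx0⟩ := hα.exists_ne_nil
      exact absurd (h ⟨x, hx, [], nil_mem_Idl a, rfl⟩) (by simpa [Idl] using hx0)
    | cons β b ihb =>
      by_cases hαβ : α.lang ⊆ β.lang
      · cases β with
        | single c =>
          obtain rfl := hα.eq_single_of_lang_subset hαβ
          obtain ⟨f, hf⟩ := ih ha' (Idl_subset_of_single_cons h)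
          exact ⟨_, (hf.succ _).cons hαβ fun _ i => Fin.succ_ne_zero (f i)⟩
        | alph d =>
          obtain ⟨f, hf⟩ := ih ha' ((Idl_subset_Idl_cons α a).trans h)
          exact ⟨_, hf.cons hαβ fun ⟨_, hc⟩ => nomatch hc⟩
      · obtain ⟨f, hf⟩ := ihb (Idl_cons_subset_of_not_lang_subset h hαβ)
        exact ⟨_, hf.succ β⟩

end

theorem ideal_embedding_general {A : Type*} (a b : List (Atom A))
    (ha : ∀ α ∈ a, α.Valid)
    (h : Idl a ⊆ Idl b) :
    ∃ f : Fin a.length → Fin b.length,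
      Monotone f ∧
      (∀ i, Idl [a.get i] ⊆ Idl [b.get (f i)]) ∧
      (∀ j : Fin b.length, (∃ c : A, b.get j = Atom.single c) →
        ∀ i i', f i = j → f i' = j → i = i') := by
  obtain ⟨f, hf⟩ := exists_isAtomEmbedding ha h
  refine ⟨f, hf.monotone, fun i => ?_, hf.injOn_single⟩
  simpa only [Idl_singleton] using hf.lang_subset i

theorem ideal_embedding {A : Type*} (a b : List (Atom A))
    (ha : ∀ α ∈ a, α.Valid) (hb : ∀ α ∈ b, α.Valid)
    (h : Idl a ⊆ Idl b) :
    ∃ f : Fin a.length → Fin b.length,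
      Monotone f ∧
      (∀ i, Idl [a.get i] ⊆ Idl [b.get (f i)]) ∧
      (∀ j : Fin b.length, (∃ c : A, b.get j = Atom.single c) →
        ∀ i i', f i = j → f i' = j → i = i') :=
  ideal_embedding_general a b ha h
end

section
/- If a sequence of atoms α₁⋯αₙ is right-reduced (for all i, α_{i+1} does not absorb α_i), then the subsequence obtained by the left-reduction procedure — keeping each atom after the first alphabet atom only if it is not absorbed by the most recently kept alphabet atom — is still right-reduced. -/
open Classical in
noncomputable def lredGo {A : Type*} : Atom A → List (Atom A) → List (Atom A)
  | _, [] => []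
  | prev, β :: r => if LeftAbsorbs prev β then lredGo prev r else β :: lredGo β r

noncomputable def lred {A : Type*} : List (Atom A) → List (Atom A)
  | [] => []
  | α :: r => α :: lredGo α r

def RightReduced {A : Type*} (r : List (Atom A)) : Prop :=
  r.Chain' fun α β => ¬ RightAbsorbs α β

/-! If `α` left-absorbs `β`, then `β.lang ⊆ α.lang` (read `Idl [α, β] = Idl [α]` at the words
`[] ++ v`), so any atom `γ` that right-absorbs `α` also right-absorbs `β`. Hence when
left-reduction drops `β` after `α`, the new neighbour pair `(α, γ)` is not right-absorptive,
because `(β, γ)` was not. -/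

namespace Atom

variable {A : Type*}

lemma nil_mem_lang_s6 (α : Atom A) : [] ∈ α.lang := by
  cases α <;> simp [Atom.lang]

lemma mem_Idl_singleton {α : Atom A} {w : List A} : w ∈ Idl [α] ↔ w ∈ α.lang := by
  simp [Idl, conc]

lemma mem_Idl_pair {α β : Atom A} {w : List A} :
    w ∈ Idl [α, β] ↔ ∃ u ∈ α.lang, ∃ v ∈ β.lang, w = u ++ v := by
  simp [Idl, conc]

lemma lang_subset_of_leftAbsorbs {α β : Atom A} (h : LeftAbsorbs α β) : β.lang ⊆ α.lang :=
  fun v hv => mem_Idl_singleton.mp <|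
    h ▸ mem_Idl_pair.mpr ⟨[], nil_mem_lang_s6 α, v, hv, rfl⟩

lemma rightAbsorbs_of_lang_subset {α β γ : Atom A} (hβα : β.lang ⊆ α.lang)
    (h : RightAbsorbs α γ) : RightAbsorbs β γ := by
  ext w
  rw [mem_Idl_pair, mem_Idl_singleton]
  constructor
  · rintro ⟨u, hu, v, hv, rfl⟩
    exact mem_Idl_singleton.mp (h ▸ mem_Idl_pair.mpr ⟨u, hβα hu, v, hv, rfl⟩)
  · exact fun hw => ⟨[], nil_mem_lang_s6 β, w, hw, rfl⟩

end Atom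

section RightReduced

variable {A : Type*}

lemma rightReduced_nil : RightReduced ([] : List (Atom A)) := List.isChain_nil

lemma rightReduced_singleton (α : Atom A) : RightReduced [α] := List.isChain_singleton α

lemma rightReduced_cons_cons {α β : Atom A} {r : List (Atom A)} :
    RightReduced (α :: β :: r) ↔ ¬ RightAbsorbs α β ∧ RightReduced (β :: r) :=
  List.isChain_cons_cons

lemma RightReduced.cons_of_leftAbsorbs {α β : Atom A} {r : List (Atom A)}
    (h : RightReduced (α :: β :: r)) (hαβ : LeftAbsorbs α β) : RightReduced (α :: r) := by
  cases r with
  | nil => exact rightReduced_singleton α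
  | cons γ r =>
    rw [rightReduced_cons_cons, rightReduced_cons_cons] at h
    exact rightReduced_cons_cons.mpr ⟨fun hαγ => h.2.1 (Atom.rightAbsorbs_of_lang_subset
      (Atom.lang_subset_of_leftAbsorbs hαβ) hαγ), h.2.2⟩

lemma RightReduced.cons_lredGo (α : Atom A) (r : List (Atom A)) (h : RightReduced (α :: r)) :
    RightReduced (α :: lredGo α r) := by
  induction r generalizing α with
  | nil => exact rightReduced_singleton α
  | cons β r ih =>
    by_cases hαβ : LeftAbsorbs α β
    · rw [lredGo, if_pos hαβ]
      exact ih α (h.cons_of_leftAbsorbs hαβ)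
    · rw [lredGo, if_neg hαβ]
      rw [rightReduced_cons_cons] at h
      exact rightReduced_cons_cons.mpr ⟨h.1, ih β h.2⟩

end RightReduced

theorem lred_preserves_rightReduced_general {A : Type*} (r : List (Atom A))
    (h : RightReduced r) :
    RightReduced (lred r) := by
  cases r with
  | nil => exact rightReduced_nil
  | cons α r => exact RightReduced.cons_lredGo α r h

theorem lred_preserves_rightReduced {A : Type*} (r : List (Atom A))
    (hr : ∀ α ∈ r, α.Valid) (h : RightReduced r) :
    RightReduced (lred r) :=
  lred_preserves_rightReduced_general r h
end

section
/- For a word w = b₁⋯bₙ over a finite alphabet Σ with |Σ| ≥ 2, the ideal I = (Σ∖{b₁})*·{b₁,ε}·(Σ∖{b₂})*·{b₂,ε}⋯(Σ∖{b_{n−1}})*·{b_{n−1},ε}·(Σ∖{bₙ})* satisfies I ∩ Σⁿ = Σⁿ ∖ {w}. -/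
def compRep {A : Type*} [Fintype A] [DecidableEq A] : List A → List (Atom A)
  | [] => []
  | [b] => [Atom.alph {b}ᶜ]
  | b :: c :: rest => Atom.alph {b}ᶜ :: Atom.single b :: compRep (c :: rest)

/-!
A word `x` lies in `Idl (compRep w)` exactly when `w` is not a scattered subword of `x`: reading `x`
greedily, the factor `(Σ ∖ {bᵢ})*` consumes `x` up to the first occurrence of `bᵢ`, and the optional
`bᵢ` then matches that occurrence. Among the words of length `|w|`, the only one having `w` as a
subword is `w` itself.
-/

namespace List

theorem cons_sublist_append_iff_of_notMem {α : Type*} {b : α} {l u y : List α} (hb : b ∉ u) :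
    b :: l <+ u ++ y ↔ b :: l <+ y := by
  induction u with
  | nil => rfl
  | cons a u ih =>
    have hba : b ≠ a := fun h => hb (h ▸ mem_cons_self)
    have hbu : b ∉ u := fun h => hb (mem_cons_of_mem a h)
    exact ⟨fun h => (ih hbu).1 (h.of_cons_of_ne hba), fun h => ((ih hbu).2 h).cons a⟩

end List

section

variable {A : Type*}

theorem mem_Idl_alph_compl_singleton_cons [Fintype A] [DecidableEq A] {b : A}
    {r : List (Atom A)} {x : List A} :
    x ∈ Idl (.alph {b}ᶜ :: r) ↔ ∃ u y, x = u ++ y ∧ b ∉ u ∧ y ∈ Idl r := by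
  simp only [Idl, conc, Atom.lang, Set.mem_ofPred_eq, Finset.mem_compl, Finset.mem_singleton]
  constructor
  · rintro ⟨u, hu, y, hy, rfl⟩
    exact ⟨u, y, rfl, fun hb => hu b hb rfl, hy⟩
  · rintro ⟨u, y, rfl, hbu, hy⟩
    exact ⟨u, fun c hc hcb => hbu (hcb ▸ hc), y, hy, rfl⟩

theorem mem_Idl_single_cons {b : A} {r : List (Atom A)} {x : List A} :
    x ∈ Idl (.single b :: r) ↔ x ∈ Idl r ∨ ∃ z, x = b :: z ∧ z ∈ Idl r := by
  simp only [Idl, conc, Atom.lang, Set.mem_insert_iff, Set.mem_singleton_iff, Set.mem_ofPred_eq]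
  constructor
  · rintro ⟨v, rfl | rfl, z, hz, rfl⟩
    exacts [Or.inl hz, Or.inr ⟨z, rfl, hz⟩]
  · rintro (hx | ⟨z, rfl, hz⟩)
    exacts [⟨[], Or.inl rfl, x, hx, rfl⟩, ⟨[b], Or.inr rfl, z, hz, rfl⟩]

theorem mem_Idl_compRep_iff [Fintype A] [DecidableEq A] :
    ∀ {w : List A}, w ≠ [] → ∀ {x : List A}, x ∈ Idl (compRep w) ↔ ¬ w.Sublist x
  | [b], _, x => by
    rw [compRep, mem_Idl_alph_compl_singleton_cons]
    simp [Idl]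
  | b :: c :: rest, _, x => by
    have ih : ∀ {y : List A}, y ∈ Idl (compRep (c :: rest)) ↔ ¬ (c :: rest).Sublist y :=
      mem_Idl_compRep_iff (List.cons_ne_nil c rest)
    simp only [compRep, mem_Idl_alph_compl_singleton_cons, mem_Idl_single_cons, ih]
    constructor
    · rintro ⟨u, y, rfl, hbu, hy | ⟨z, rfl, hz⟩⟩ hs <;>
        rw [List.cons_sublist_append_iff_of_notMem hbu] at hs
      exacts [hy (List.sublist_of_cons_sublist hs), hz (List.cons_sublist_cons.mp hs)]
    · intro hs
      by_cases hbx : b ∈ x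
      · obtain ⟨u, z, rfl, hbu⟩ := List.eq_append_cons_of_mem hbx
        refine ⟨u, b :: z, rfl, hbu, Or.inr ⟨z, rfl, fun hz => hs ?_⟩⟩
        exact (List.cons_sublist_cons.mpr hz).trans (List.sublist_append_right u _)
      · exact ⟨x, [], by simp, hbx, Or.inl (by simp)⟩

end

theorem complement_ideal_general {A : Type*} [Fintype A] [DecidableEq A]
    (w : List A) (hw : w ≠ []) :
    Idl (compRep w) ∩ {x : List A | x.length = w.length} =
      {x : List A | x.length = w.length} \ {w} := by
  ext x
  simp only [Set.mem_inter_iff, Set.mem_sdiff, Set.mem_ofPred_eq, Set.mem_singleton_iff,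
    mem_Idl_compRep_iff hw]
  exact ⟨fun ⟨hs, hlen⟩ => ⟨hlen, fun h => hs (h ▸ List.Sublist.refl x)⟩,
    fun ⟨hlen, hne⟩ => ⟨fun hs => hne (hs.eq_of_length hlen.symm).symm, hlen⟩⟩

theorem complement_ideal {A : Type*} [Fintype A] [DecidableEq A]
    (hcard : 2 ≤ Fintype.card A) (w : List A) (hw : w ≠ []) :
    Idl (compRep w) ∩ {x : List A | x.length = w.length} =
      {x : List A | x.length = w.length} \ {w} :=
  complement_ideal_general w hw
end

section
/- Let L ⊆ Σ* be a finite language and I ⊆ Σ* an infinite ideal. Then L ⊆ I if and only if L ∪ I is directed with respect to the scattered subword order. -/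
lemma ideal_lengths_unbounded {A : Type*} {I : Set (List A)} (hIinf : I.Infinite)
    (hI : IsIdeal I) (n : ℕ) : ∃ v ∈ I, n < v.length := by
  by_contra h
  push_neg at h
  obtain ⟨hne, hdc, hdir⟩ := hI
  -- lengths bounded by n; get element of max length
  have hSne : (List.length '' I).Nonempty := hne.image _
  have hbdd : BddAbove (List.length '' I) := ⟨n, by rintro m ⟨v, hv, rfl⟩; exact h v hv⟩
  have hmem := Nat.sSup_mem hSne hbdd
  obtain ⟨w, hw, hwlen⟩ := hmem
  have hall : ∀ v ∈ I, v.Sublist w := by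
    intro v hv
    obtain ⟨x, hx, hvx, hwx⟩ := hdir v hv w hw
    have hxle : x.length ≤ sSup (List.length '' I) := le_csSup hbdd ⟨x, hx, rfl⟩
    have : w = x := hwx.eq_of_length_le (by omega)
    exact this ▸ hvx
  have : I.Finite := by
    apply Set.Finite.subset (w.sublists.finite_toSet)
    intro v hv
    simpa [List.mem_sublists] using hall v hv
  exact hIinf this

theorem finite_subset_infinite_ideal_iff_directed {A : Type*}
    (L I : Set (List A)) (hL : L.Finite) (hIinf : I.Infinite) (hI : IsIdeal I) :
    L ⊆ I ↔ IsDirectedLang (L ∪ I) := by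
  obtain ⟨hne, hdc, hdir⟩ := hI
  constructor
  · intro hsub u hu v hv
    have hu' : u ∈ I := by rcases hu with h | h; exact hsub h; exact h
    have hv' : v ∈ I := by rcases hv with h | h; exact hsub h; exact h
    obtain ⟨w, hw, h1, h2⟩ := hdir u hu' v hv'
    exact ⟨w, Or.inr hw, h1, h2⟩
  · intro hdir' u hu
    obtain ⟨n, hn⟩ := (hL.image List.length).bddAbove
    obtain ⟨v, hv, hvlen⟩ := ideal_lengths_unbounded hIinf ⟨hne, hdc, hdir⟩ n
    obtain ⟨w, hw, huw, hvw⟩ := hdir' u (Or.inl hu) v (Or.inr hv)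
    rcases hw with hw | hw
    · exfalso
      have : w.length ≤ n := hn ⟨w, hw, rfl⟩
      have := hvw.length_le
      omega
    · exact hdc u w huw hw
end

section
/- Every nonempty downward closed subset D of Σ* can be written as a finite union of ideals D = I₁ ∪ ⋯ ∪ Iₙ. -/
/-!
By Higman's lemma, `Sublist` is a well-quasi-order on words over a finite alphabet, so there is no
infinite strictly decreasing chain of downward closed sets and we may argue by well-founded
induction. A nonempty downward closed set `D` that is not directed contains words `u`, `v` with no
common upper bound in `D`; then `D` is the union of its proper downward closed subsets
`{w ∈ D | ¬ u ≼ w}` and `{w ∈ D | ¬ v ≼ w}`.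
-/

theorem List.wellQuasiOrdered_sublist {A : Type*} [Finite A] :
    WellQuasiOrdered fun l₁ l₂ : List A => l₁.Sublist l₂ := by
  have higman := (Set.partiallyWellOrderedOn_univ_iff.2
    (Finite.wellQuasiOrdered (· = ·))).partiallyWellOrderedOn_sublistForall₂ (α := A) (· = ·)
  simp only [Set.mem_univ, imp_true_iff, Set.ofPred_true,
    Set.partiallyWellOrderedOn_univ_iff] at higman
  intro f
  obtain ⟨m, n, hmn, hsub⟩ := higman f
  obtain ⟨l, hl, hsub⟩ := List.sublistForall₂_iff.1 hsub
  rw [List.forall₂_eq_eq_eq] at hl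
  exact ⟨m, n, hmn, hl ▸ hsub⟩

section

variable {A : Type*}

theorem wellFounded_ssubset_downwardClosed [Finite A] :
    WellFounded fun X Y : Set (List A) => DownwardClosed X ∧ X ⊂ Y := by
  refine wellFounded_iff_isEmpty_descending_chain.2 ⟨fun ⟨D, hD⟩ => ?_⟩
  have hanti : Antitone D := antitone_nat_of_succ_le fun n => (hD n).2.subset
  choose x hxD hxD' using fun n => Set.exists_of_ssubset (hD n).2
  obtain ⟨i, j, hij, hsub⟩ := List.wellQuasiOrdered_sublist x
  exact hxD' i ((hD i).1 _ _ hsub (hanti hij (hxD j)))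

theorem DownwardClosed.sep_not_sublist {D : Set (List A)} (hD : DownwardClosed D) (u : List A) :
    DownwardClosed {w ∈ D | ¬ u.Sublist w} :=
  fun _ _ hvw ⟨hwD, hu⟩ => ⟨hD _ _ hvw hwD, fun h => hu (h.trans hvw)⟩

theorem DownwardClosed.exists_ssubset_union_of_not_directed {D : Set (List A)}
    (hD : DownwardClosed D) (hdir : ¬ IsDirectedLang D) :
    ∃ D₁ D₂, DownwardClosed D₁ ∧ D₁ ⊂ D ∧ DownwardClosed D₂ ∧ D₂ ⊂ D ∧ D = D₁ ∪ D₂ := by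
  simp only [IsDirectedLang, not_forall, not_exists, not_and] at hdir
  obtain ⟨u, hu, v, hv, hno⟩ := hdir
  refine ⟨{w ∈ D | ¬ u.Sublist w}, {w ∈ D | ¬ v.Sublist w}, hD.sep_not_sublist u,
    ⟨Set.sep_subset _ _, fun h => (h hu).2 (List.Sublist.refl u)⟩, hD.sep_not_sublist v,
    ⟨Set.sep_subset _ _, fun h => (h hv).2 (List.Sublist.refl v)⟩, ?_⟩
  ext w
  refine ⟨fun hw => ?_, fun hw => hw.elim (·.1) (·.1)⟩
  by_contra hw'
  simp only [Set.mem_union, Set.mem_ofPred_eq, hw, true_and, not_or, not_not] at hw'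
  exact hno w hw hw'.1 hw'.2

def IsFiniteUnionOfIdeals (D : Set (List A)) : Prop :=
  ∃ S : Set (Set (List A)), S.Finite ∧ (∀ I ∈ S, IsIdeal I) ∧ D = ⋃₀ S

namespace IsFiniteUnionOfIdeals

theorem empty : IsFiniteUnionOfIdeals (∅ : Set (List A)) :=
  ⟨∅, Set.finite_empty, by simp, Set.sUnion_empty.symm⟩

theorem of_isIdeal {I : Set (List A)} (hI : IsIdeal I) : IsFiniteUnionOfIdeals I :=
  ⟨{I}, Set.finite_singleton I, by simpa using hI, Set.sUnion_singleton I |>.symm⟩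

theorem union {D₁ D₂ : Set (List A)} (h₁ : IsFiniteUnionOfIdeals D₁)
    (h₂ : IsFiniteUnionOfIdeals D₂) : IsFiniteUnionOfIdeals (D₁ ∪ D₂) := by
  obtain ⟨S₁, hS₁, hI₁, rfl⟩ := h₁
  obtain ⟨S₂, hS₂, hI₂, rfl⟩ := h₂
  exact ⟨S₁ ∪ S₂, hS₁.union hS₂, fun I hI => hI.elim (hI₁ I) (hI₂ I), (Set.sUnion_union _ _).symm⟩

theorem exists_fin {D : Set (List A)} (h : IsFiniteUnionOfIdeals D) :
    ∃ (n : ℕ) (I : Fin n → Set (List A)), (∀ i, IsIdeal (I i)) ∧ D = ⋃ i, I i := by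
  obtain ⟨S, hS, hI, rfl⟩ := h
  obtain ⟨n, f, hf⟩ := hS.fin_embedding
  exact ⟨n, f, fun i => hI _ (hf ▸ Set.mem_range_self i), by rw [← hf, Set.sUnion_range]⟩

end IsFiniteUnionOfIdeals

theorem DownwardClosed.isFiniteUnionOfIdeals [Finite A] {D : Set (List A)}
    (hD : DownwardClosed D) : IsFiniteUnionOfIdeals D := by
  induction D using (wellFounded_ssubset_downwardClosed (A := A)).induction with
  | _ D ih =>
  rcases D.eq_empty_or_nonempty with rfl | hne
  · exact .empty
  by_cases hdir : IsDirectedLang D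
  · exact .of_isIdeal ⟨hne, hD, hdir⟩
  obtain ⟨D₁, D₂, hD₁, hD₁D, hD₂, hD₂D, rfl⟩ := hD.exists_ssubset_union_of_not_directed hdir
  exact (ih D₁ ⟨hD₁, hD₁D⟩ hD₁).union (ih D₂ ⟨hD₂, hD₂D⟩ hD₂)

end

theorem ideal_decomposition_general {A : Type*} [Fintype A] (D : Set (List A))
    (hD : DownwardClosed D) :
    ∃ (n : ℕ) (I : Fin n → Set (List A)),
      (∀ i, IsIdeal (I i)) ∧ D = ⋃ i, I i :=
  hD.isFiniteUnionOfIdeals.exists_fin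

theorem ideal_decomposition {A : Type*} [Fintype A] (D : Set (List A))
    (hD : DownwardClosed D) (hne : D.Nonempty) :
    ∃ (n : ℕ) (I : Fin n → Set (List A)),
      (∀ i, IsIdeal (I i)) ∧ D = ⋃ i, I i :=
  ideal_decomposition_general D hD
end

section
/- Let Σ be a finite alphabet, fix a linear order on Σ, and for nonempty Δ ⊆ Σ let w_Δ be the word listing the elements of Δ once in increasing order. For any atoms α (alphabet atom Δ*) and any ideal representation β₁⋯β_m over Σ: if the word (w_Δ)^{m+1} belongs to Idl(β_j ⋯ β_{j'}) for some 1 ≤ j ≤ j' ≤ m, then there exists k ∈ [j, j'] such that β_k is an alphabet atom whose alphabet contains Δ. -/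
lemma forall2_mem_aux {A B : Type*} {R : A → B → Prop} :
    ∀ {us : List A} {r : List B}, List.Forall₂ R us r → ∀ u ∈ us, ∃ β ∈ r, R u β := by
  intro us r h
  induction h with
  | nil => intro u hu; simp at hu
  | cons h₁ _ ih =>
    intro u hu
    rcases List.mem_cons.mp hu with rfl | hu
    · exact ⟨_, List.mem_cons_self, h₁⟩
    · obtain ⟨β, hβ, hR⟩ := ih u hu
      exact ⟨β, List.mem_cons_of_mem _ hβ, hR⟩

lemma mem_Idl_iff_aux {A : Type*} (r : List (Atom A)) (w : List A) :
    w ∈ Idl r ↔ ∃ us : List (List A),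
      List.Forall₂ (fun u α => u ∈ Atom.lang α) us r ∧ us.flatten = w := by
  induction r generalizing w with
  | nil =>
    simp only [Idl, Set.mem_singleton_iff]
    constructor
    · rintro rfl; exact ⟨[], List.Forall₂.nil, rfl⟩
    · rintro ⟨us, h, rfl⟩; cases h; rfl
  | cons α r ih =>
    simp only [Idl, conc, Set.mem_setOf_eq]
    constructor
    · rintro ⟨u, hu, v, hv, rfl⟩
      obtain ⟨us, h1, rfl⟩ := (ih v).mp hv
      exact ⟨u :: us, List.Forall₂.cons hu h1, rfl⟩
    · rintro ⟨us, h, rfl⟩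
      cases h with
      | cons hu h' => exact ⟨_, hu, _, (ih _).mpr ⟨_, h', rfl⟩, rfl⟩

lemma pigeon_aux {A : Type*} (wΔ : List A) (hL : wΔ ≠ []) :
    ∀ (us : List (List A)) (t : List A) (k : ℕ), us.length < k →
      us.flatten = t ++ (List.replicate k wΔ).flatten →
      ∃ u ∈ us, wΔ <:+: u ∧ 2 ≤ u.length := by
  have hLpos : 0 < wΔ.length := List.length_pos_iff.mpr hL
  intro us
  induction us with
  | nil =>
    intro t k hk heq
    exfalso
    obtain ⟨k', rfl⟩ : ∃ k', k = k' + 1 := ⟨k - 1, by omega⟩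
    simp only [List.replicate_succ, List.flatten, List.flatten_cons] at heq
    have := congrArg List.length heq
    simp at this
    omega
  | cons u us ih =>
    intro t k hk heq
    obtain ⟨k', rfl⟩ : ∃ k', k = k' + 1 := ⟨k - 1, by omega⟩
    simp only [List.replicate_succ, List.flatten, List.flatten_cons] at heq
    by_cases hlen : t.length + wΔ.length + 1 ≤ u.length
    · refine ⟨u, List.mem_cons_self, ?_, by omega⟩
      have hpre : u <+: t ++ (wΔ ++ (List.replicate k' wΔ).flatten) := ⟨us.flatten, heq⟩
      have hpre2 : t ++ wΔ <+: t ++ (wΔ ++ (List.replicate k' wΔ).flatten) :=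
        ⟨(List.replicate k' wΔ).flatten, by simp⟩
      have h3 : t ++ wΔ <+: u :=
        List.prefix_of_prefix_length_le hpre2 hpre (by simp; omega)
      obtain ⟨s, hs⟩ := h3
      exact ⟨t, s, by simpa using hs⟩
    · have h1 : u.length ≤ (t ++ wΔ).length := by simp; omega
      have hjoin : us.flatten =
          ((t ++ wΔ).drop u.length) ++ (List.replicate k' wΔ).flatten := by
        have h2 := congrArg (List.drop u.length) heq
        rw [List.append_eq, List.drop_left] at h2
        rw [h2, ← List.append_assoc, List.drop_append,
          Nat.sub_eq_zero_of_le h1, List.drop_zero]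
      obtain ⟨v, hv, hinf, hlen2⟩ := ih _ k' (by simp at hk; omega) hjoin
      exact ⟨v, List.mem_cons_of_mem _ hv, hinf, hlen2⟩

theorem repeated_word_forces_alphabet_atom {A : Type*}
    (Δ : Finset A) (hΔ : Δ.Nonempty) (wΔ : List A) (hnd : wΔ.Nodup)
    (hmem : ∀ a : A, a ∈ wΔ ↔ a ∈ Δ)
    (b p seg s : List (Atom A)) (hb : b = p ++ seg ++ s)
    (h : (List.replicate (b.length + 1) wΔ).flatten ∈ Idl seg) :
    ∃ β ∈ seg, ∃ Δ' : Finset A, β = Atom.alph Δ' ∧ Δ ⊆ Δ' := by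
  have hL : wΔ ≠ [] := by
    obtain ⟨a, ha⟩ := hΔ
    intro hnil; rw [hnil] at hmem; simpa using (hmem a).mpr ha
  obtain ⟨us, hf, hjoin⟩ := (mem_Idl_iff_aux seg _).mp h
  have hlen : us.length = seg.length := hf.length_eq
  have hseglen : seg.length ≤ b.length := by subst hb; simp; omega
  obtain ⟨u, hu, hinf, hu2⟩ :=
    pigeon_aux wΔ hL us [] (b.length + 1) (by omega) (by simpa using hjoin)
  obtain ⟨β, hβ, hβlang⟩ := forall2_mem_aux hf u hu
  cases β with
  | single a =>
    exfalso
    simp only [Atom.lang, Set.mem_insert_iff, Set.mem_singleton_iff] at hβlang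
    rcases hβlang with rfl | rfl <;> simp at hu2
  | alph d =>
    refine ⟨_, hβ, d, rfl, ?_⟩
    intro a ha
    have haw : a ∈ wΔ := (hmem a).mpr ha
    exact hβlang a (hinf.sublist.subset haw)
end
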